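/- arXiv:1402.1734 — 6 statements merged into one kernel-verified Lean document; each statement's English description precedes it below -/
import Mathlib

section
/- Let L be a nonempty finite type, u : L → ℝ, and w : L → ℝ with w(ℓ) > 0 for every ℓ. Then for every β ∈ ℝ, the derivative of the Gibbs mean m at β equals the Gibbs variance: m'(β) = ∑_{ℓ} p_β(ℓ)·u(ℓ)² − (∑_{ℓ} p_β(ℓ)·u(ℓ))². -/
/-!
The denominator `Z(β) = ∑ w ℓ exp (β u ℓ)` has derivative the numerator `N(β)`, and `N` has
derivative `N₂(β) = ∑ w ℓ (u ℓ)² exp (β u ℓ)`. The quotient rule then gives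
`(N / Z)' = N₂ / Z - (N / Z)²`, which is the second moment minus the squared first moment of
the Gibbs probabilities `w ℓ exp (β u ℓ) / Z`.
-/

open Finset Real

theorem hasDerivAt_sum_mul_exp_mul {ι : Type*} (s : Finset ι) (c u : ι → ℝ) (β : ℝ) :
    HasDerivAt (fun b : ℝ => ∑ i ∈ s, c i * exp (b * u i))
      (∑ i ∈ s, c i * u i * exp (β * u i)) β := by
  refine (HasDerivAt.fun_sum fun i _ =>
    ((hasDerivAt_mul_const (u i)).exp).const_mul (c i)).congr_deriv ?_
  exact sum_congr rfl fun i _ => by ring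

theorem HasDerivAt.div_of_denom_deriv_eq_num {Z N : ℝ → ℝ} {N₂ β : ℝ}
    (hZ : HasDerivAt Z (N β) β) (hN : HasDerivAt N N₂ β) (hZ₀ : Z β ≠ 0) :
    HasDerivAt (fun b => N b / Z b) (N₂ / Z β - (N β / Z β) ^ 2) β := by
  refine (hN.div hZ hZ₀).congr_deriv ?_
  field_simp

/-- The derivative of the Gibbs mean equals the Gibbs variance. -/
theorem gibbsMean_hasDerivAt_gibbsVariance {L : Type*} [Fintype L] [Nonempty L]
    (u w : L → ℝ) (hw : ∀ ℓ, 0 < w ℓ) (β : ℝ) :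
    HasDerivAt (fun β : ℝ =>
        (∑ ℓ, w ℓ * u ℓ * Real.exp (β * u ℓ)) / (∑ ℓ, w ℓ * Real.exp (β * u ℓ)))
      ((∑ ℓ, (w ℓ * Real.exp (β * u ℓ) / ∑ ℓ', w ℓ' * Real.exp (β * u ℓ')) * (u ℓ) ^ 2)
        - (∑ ℓ, (w ℓ * Real.exp (β * u ℓ) / ∑ ℓ', w ℓ' * Real.exp (β * u ℓ')) * u ℓ) ^ 2)
      β := by
  have hZ : 0 < ∑ ℓ, w ℓ * exp (β * u ℓ) :=
    sum_pos (fun ℓ _ => mul_pos (hw ℓ) (exp_pos _)) univ_nonempty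
  have hmean := (hasDerivAt_sum_mul_exp_mul univ w u β).div_of_denom_deriv_eq_num
    (hasDerivAt_sum_mul_exp_mul univ (fun ℓ => w ℓ * u ℓ) u β) hZ.ne'
  refine hmean.congr_deriv ?_
  simp only [sum_div]
  congr 1
  · exact sum_congr rfl fun ℓ _ => by ring
  · congr 1
    exact sum_congr rfl fun ℓ _ => by ring
end

section
/- Let L be a nonempty finite type, u : L → ℝ, and w : L → ℝ with w(ℓ) > 0 for every ℓ. If u is not constant (there exist ℓ, ℓ' ∈ L with u(ℓ) ≠ u(ℓ')), then the Gibbs mean β ↦ m(β) = (∑_{ℓ} w(ℓ)·u(ℓ)·exp(β·u(ℓ))) / (∑_{ℓ} w(ℓ)·exp(β·u(ℓ))) is strictly increasing on ℝ. -/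
open Real Finset

/-!
Raising the inverse temperature from `β₁` to `β₂` reweights each label by `exp ((β₂ - β₁) u ℓ)`,
a likelihood ratio that increases strictly with `u`. Symmetrizing over pairs of labels writes
the difference of the two means, up to positive factors, as a sum of terms
`(u ℓ - u ℓ') (p ℓ q ℓ' - q ℓ p ℓ')`, where `p` and `q` are the Boltzmann weights at `β₂` and `β₁`;
these are all nonnegative and strictly positive as soon as `u ℓ ≠ u ℓ'`.
-/

namespace Finset

variable {ι : Type*} (s : Finset ι)

theorem two_mul_sum_mul_sum_sub_sum_mul_sum {R : Type*} [CommRing R] (a p q : ι → R) :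
    2 * ((∑ i ∈ s, p i * a i) * ∑ i ∈ s, q i - (∑ i ∈ s, q i * a i) * ∑ i ∈ s, p i) =
      ∑ i ∈ s, ∑ j ∈ s, (a i - a j) * (p i * q j - q i * p j) := by
  have hswap : ∑ i ∈ s, ∑ j ∈ s, a j * (q i * p j - p i * q j) =
      ∑ i ∈ s, ∑ j ∈ s, a i * (p i * q j - q i * p j) := by
    rw [sum_comm]
    exact sum_congr rfl fun i _ => sum_congr rfl fun j _ => by ring
  calc 2 * ((∑ i ∈ s, p i * a i) * ∑ i ∈ s, q i - (∑ i ∈ s, q i * a i) * ∑ i ∈ s, p i)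
      = 2 * ∑ i ∈ s, ∑ j ∈ s, a i * (p i * q j - q i * p j) := by
        simp only [sum_mul_sum, ← sum_sub_distrib, mul_sub]
        exact congrArg _ (sum_congr rfl fun i _ => sum_congr rfl fun j _ => by ring)
    _ = ∑ i ∈ s, ∑ j ∈ s, a i * (p i * q j - q i * p j) +
          ∑ i ∈ s, ∑ j ∈ s, a j * (q i * p j - p i * q j) := by
        rw [hswap, two_mul]
    _ = ∑ i ∈ s, ∑ j ∈ s, (a i - a j) * (p i * q j - q i * p j) := by
        rw [← sum_add_distrib]
        refine sum_congr rfl fun i _ => ?_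
        rw [← sum_add_distrib]
        exact sum_congr rfl fun j _ => by ring

variable {s} {a p q : ι → ℝ}

theorem mul_sub_mul_pos_of_likelihoodRatio
    (hpq : ∀ i ∈ s, ∀ j ∈ s, a i < a j → p i * q j < q i * p j)
    {i j : ι} (hi : i ∈ s) (hj : j ∈ s) (hij : a i ≠ a j) :
    0 < (a i - a j) * (p i * q j - q i * p j) := by
  rcases hij.lt_or_gt with hlt | hgt
  · exact mul_pos_of_neg_of_neg (sub_neg.2 hlt) (sub_neg.2 (hpq i hi j hj hlt))
  · have hratio := hpq j hj i hi hgt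
    exact mul_pos (sub_pos.2 hgt) (by linarith [mul_comm (p j) (q i), mul_comm (q j) (p i)])

theorem mul_sub_mul_nonneg_of_likelihoodRatio
    (hpq : ∀ i ∈ s, ∀ j ∈ s, a i < a j → p i * q j < q i * p j)
    {i j : ι} (hi : i ∈ s) (hj : j ∈ s) :
    0 ≤ (a i - a j) * (p i * q j - q i * p j) := by
  by_cases hij : a i = a j
  · simp [hij]
  · exact (mul_sub_mul_pos_of_likelihoodRatio hpq hi hj hij).le

theorem sum_mul_div_sum_lt_of_likelihoodRatio (hp : 0 < ∑ i ∈ s, p i) (hq : 0 < ∑ i ∈ s, q i)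
    (hpq : ∀ i ∈ s, ∀ j ∈ s, a i < a j → p i * q j < q i * p j)
    (ha : ∃ i ∈ s, ∃ j ∈ s, a i ≠ a j) :
    (∑ i ∈ s, q i * a i) / ∑ i ∈ s, q i < (∑ i ∈ s, p i * a i) / ∑ i ∈ s, p i := by
  obtain ⟨i₀, hi₀, j₀, hj₀, hne⟩ := ha
  have hpairs : 0 < ∑ i ∈ s, ∑ j ∈ s, (a i - a j) * (p i * q j - q i * p j) :=
    sum_pos' (fun i hi => sum_nonneg fun j hj => mul_sub_mul_nonneg_of_likelihoodRatio hpq hi hj)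
      ⟨i₀, hi₀, sum_pos' (fun j hj => mul_sub_mul_nonneg_of_likelihoodRatio hpq hi₀ hj)
        ⟨j₀, hj₀, mul_sub_mul_pos_of_likelihoodRatio hpq hi₀ hj₀ hne⟩⟩
  rw [← two_mul_sum_mul_sum_sub_sum_mul_sum] at hpairs
  rw [div_lt_div_iff₀ hq hp]
  linarith

end Finset

theorem Real.exp_mul_mul_exp_mul_lt {β₁ β₂ x y : ℝ} (hβ : β₁ < β₂) (hxy : x < y) :
    exp (β₂ * x) * exp (β₁ * y) < exp (β₁ * x) * exp (β₂ * y) := by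
  rw [← exp_add, ← exp_add, exp_lt_exp]
  nlinarith

/-- If u is not constant, the Gibbs mean is strictly increasing in β. -/
theorem gibbsMean_strictMono {L : Type*} [Fintype L] [Nonempty L]
    (u w : L → ℝ) (hw : ∀ ℓ, 0 < w ℓ)
    (hu : ∃ ℓ ℓ' : L, u ℓ ≠ u ℓ') :
    StrictMono (fun β : ℝ =>
      (∑ ℓ, w ℓ * u ℓ * Real.exp (β * u ℓ)) / (∑ ℓ, w ℓ * Real.exp (β * u ℓ))) := by
  intro β₁ β₂ hβ
  have hZ : ∀ β : ℝ, 0 < ∑ ℓ, w ℓ * exp (β * u ℓ) := fun β =>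
    sum_pos (fun ℓ _ => mul_pos (hw ℓ) (exp_pos _)) univ_nonempty
  have hratio : ∀ ℓ ∈ univ, ∀ ℓ' ∈ univ, u ℓ < u ℓ' →
      w ℓ * exp (β₂ * u ℓ) * (w ℓ' * exp (β₁ * u ℓ')) <
        w ℓ * exp (β₁ * u ℓ) * (w ℓ' * exp (β₂ * u ℓ')) := fun ℓ _ ℓ' _ hlt => by
    have hweighted :=
      mul_lt_mul_of_pos_left (exp_mul_mul_exp_mul_lt hβ hlt) (mul_pos (hw ℓ) (hw ℓ'))
    linarith
  obtain ⟨ℓ, ℓ', hne⟩ := hu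
  have hmean := sum_mul_div_sum_lt_of_likelihoodRatio (hZ β₂) (hZ β₁) hratio
    ⟨ℓ, mem_univ _, ℓ', mem_univ _, hne⟩
  simpa only [mul_right_comm (w _) (u _)] using hmean
end

section
/- Let L be a nonempty finite type, u : L → ℝ, and w : L → ℝ with w(ℓ) > 0 for every ℓ. Then the Gibbs mean m(β) = (∑_{ℓ} w(ℓ)·u(ℓ)·exp(β·u(ℓ))) / (∑_{ℓ} w(ℓ)·exp(β·u(ℓ))) tends to min_{ℓ ∈ L} u(ℓ) as β → −∞. -/
open Filter Real Finset Topology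

/-! As β → −∞ every Boltzmann factor `exp (β * u ℓ)` is negligible against `exp (β * m)`,
`m = min u`, unless `u ℓ = m`. Dividing numerator and denominator by `exp (β * m)`, both converge
to sums over the minimisers of `u`, weighted by `w`, and their ratio is `m`. -/

theorem tendsto_exp_mul_atBot_of_nonneg {c : ℝ} (hc : 0 ≤ c) :
    Tendsto (fun β : ℝ => exp (β * c)) atBot (𝓝 (if c = 0 then 1 else 0)) := by
  rcases hc.eq_or_lt with rfl | hpos
  · simp
  · rw [if_neg hpos.ne']
    exact tendsto_exp_atBot.comp (tendsto_id.atBot_mul_const hpos)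

theorem tendsto_sum_mul_exp_sub_atBot {L : Type*} [Fintype L] (a u : L → ℝ)
    {m : ℝ} (hm : ∀ ℓ, m ≤ u ℓ) :
    Tendsto (fun β : ℝ => ∑ ℓ, a ℓ * exp (β * (u ℓ - m))) atBot
      (𝓝 (∑ ℓ with u ℓ = m, a ℓ)) := by
  have hlim : ∑ ℓ with u ℓ = m, a ℓ = ∑ ℓ, a ℓ * (if u ℓ - m = 0 then 1 else 0) := by
    simp only [sum_filter, mul_ite, mul_one, mul_zero, sub_eq_zero]
  rw [hlim]
  exact tendsto_finsetSum _ fun ℓ _ =>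
    tendsto_const_nhds.mul (tendsto_exp_mul_atBot_of_nonneg (sub_nonneg.mpr (hm ℓ)))

theorem sum_mul_exp_div_sum_mul_exp_eq_sub {L : Type*} [Fintype L] (a b u : L → ℝ) (m β : ℝ) :
    (∑ ℓ, a ℓ * exp (β * u ℓ)) / (∑ ℓ, b ℓ * exp (β * u ℓ)) =
      (∑ ℓ, a ℓ * exp (β * (u ℓ - m))) / (∑ ℓ, b ℓ * exp (β * (u ℓ - m))) := by
  have hfactor : ∀ c : L → ℝ,
      ∑ ℓ, c ℓ * exp (β * u ℓ) = exp (β * m) * ∑ ℓ, c ℓ * exp (β * (u ℓ - m)) := by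
    intro c
    rw [mul_sum]
    refine sum_congr rfl fun ℓ _ => ?_
    rw [mul_left_comm, ← exp_add]
    ring_nf
  rw [hfactor a, hfactor b, mul_div_mul_left _ _ (exp_ne_zero _)]

/-- The Gibbs mean tends to the minimum of u as β → −∞. -/
theorem gibbsMean_tendsto_atBot_min {L : Type*} [Fintype L] [Nonempty L]
    (u w : L → ℝ) (hw : ∀ ℓ, 0 < w ℓ) :
    Filter.Tendsto
      (fun β : ℝ =>
        (∑ ℓ, w ℓ * u ℓ * Real.exp (β * u ℓ)) / (∑ ℓ, w ℓ * Real.exp (β * u ℓ)))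
      Filter.atBot (nhds (Finset.univ.inf' Finset.univ_nonempty u)) := by
  set m := univ.inf' univ_nonempty u
  have hm : ∀ ℓ, m ≤ u ℓ := fun ℓ => inf'_le _ (mem_univ ℓ)
  obtain ⟨ℓ₀, -, hℓ₀⟩ := exists_mem_eq_inf' univ_nonempty u
  have hZ : 0 < ∑ ℓ with u ℓ = m, w ℓ :=
    sum_pos (fun ℓ _ => hw ℓ) ⟨ℓ₀, mem_filter.mpr ⟨mem_univ _, hℓ₀.symm⟩⟩
  have hnum : ∑ ℓ with u ℓ = m, w ℓ * u ℓ = m * ∑ ℓ with u ℓ = m, w ℓ := by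
    rw [mul_sum]
    exact sum_congr rfl fun ℓ hℓ => by rw [(mem_filter.mp hℓ).2, mul_comm]
  have hlim := (tendsto_sum_mul_exp_sub_atBot (fun ℓ => w ℓ * u ℓ) u hm).div
    (tendsto_sum_mul_exp_sub_atBot w u hm) hZ.ne'
  rw [hnum, mul_div_cancel_right₀ _ hZ.ne'] at hlim
  exact hlim.congr fun β => (sum_mul_exp_div_sum_mul_exp_eq_sub _ _ u m β).symm
end

section
/- Let S and L be nonempty finite types, U : S → L → ℝ, x : S → L, and w : S → L → ℝ with w(s)(ℓ) > 0 for all s, ℓ. Define f(β) = ∑_{s ∈ S} [U(s)(x(s)) − (∑_{ℓ} w(s)(ℓ)·U(s)(ℓ)·exp(β·U(s)(ℓ))) / (∑_{ℓ} w(s)(ℓ)·exp(β·U(s)(ℓ)))]. Then f(β) tends to ∑_{s ∈ S} (U(s)(x(s)) − max_{ℓ ∈ L} U(s)(ℓ)) as β → +∞. -/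
/-!
Factor `exp (β * max U)` out of numerator and denominator: each `exp (β * (U ℓ - max U))` tends
to `1` at the maximizers of `U` and to `0` elsewhere, so the Gibbs mean becomes a weighted average
of `U` over its maximizers, which is `max U`.
-/

open Filter Real Finset

lemma tendsto_exp_mul_sub_atTop {c M : ℝ} (h : c ≤ M) :
    Tendsto (fun β : ℝ => exp (β * (c - M))) atTop (nhds (if c = M then 1 else 0)) := by
  rcases h.eq_or_lt with rfl | hlt
  · simp
  · rw [if_neg hlt.ne]
    exact tendsto_exp_atBot.comp (tendsto_id.atTop_mul_const_of_neg (sub_neg.mpr hlt))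

lemma sum_mul_exp_eq_exp_mul_sum {ι : Type*} (s : Finset ι) (f g : ι → ℝ) (β M : ℝ) :
    ∑ i ∈ s, f i * exp (β * g i) = exp (β * M) * ∑ i ∈ s, f i * exp (β * (g i - M)) := by
  rw [mul_sum]
  refine sum_congr rfl fun i _ => ?_
  rw [mul_left_comm, ← exp_add]
  ring_nf

lemma tendsto_gibbs_mean_atTop {L : Type*} [Fintype L] [Nonempty L]
    (a g : L → ℝ) (ha : ∀ ℓ, 0 < a ℓ) :
    Tendsto (fun β : ℝ => (∑ ℓ, a ℓ * g ℓ * exp (β * g ℓ)) / (∑ ℓ, a ℓ * exp (β * g ℓ)))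
      atTop (nhds (univ.sup' univ_nonempty g)) := by
  set M := univ.sup' univ_nonempty g
  set c : L → ℝ := fun ℓ => if g ℓ = M then 1 else 0
  have hexp ℓ : Tendsto (fun β : ℝ => exp (β * (g ℓ - M))) atTop (nhds (c ℓ)) :=
    tendsto_exp_mul_sub_atTop (le_sup' g (mem_univ ℓ))
  have hnum : Tendsto (fun β : ℝ => ∑ ℓ, a ℓ * g ℓ * exp (β * (g ℓ - M))) atTop
      (nhds (∑ ℓ, a ℓ * g ℓ * c ℓ)) :=
    tendsto_finsetSum _ fun ℓ _ => (hexp ℓ).const_mul _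
  have hden : Tendsto (fun β : ℝ => ∑ ℓ, a ℓ * exp (β * (g ℓ - M))) atTop
      (nhds (∑ ℓ, a ℓ * c ℓ)) :=
    tendsto_finsetSum _ fun ℓ _ => (hexp ℓ).const_mul _
  have hden_pos : 0 < ∑ ℓ, a ℓ * c ℓ := by
    obtain ⟨ℓ₀, -, hℓ₀⟩ := exists_mem_eq_sup' univ_nonempty g
    refine sum_pos' (fun ℓ _ => ?_) ⟨ℓ₀, mem_univ _, ?_⟩
    · by_cases h : g ℓ = M <;> simp [c, h, (ha ℓ).le]
    · simp [c, M, ← hℓ₀, ha ℓ₀]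
  have hnum_eq : ∑ ℓ, a ℓ * g ℓ * c ℓ = M * ∑ ℓ, a ℓ * c ℓ := by
    rw [mul_sum]
    refine sum_congr rfl fun ℓ _ => ?_
    by_cases h : g ℓ = M <;> simp [c, h, mul_comm]
  have hlim := hnum.div hden hden_pos.ne'
  rw [hnum_eq, mul_div_cancel_right₀ _ hden_pos.ne'] at hlim
  refine hlim.congr fun β => ?_
  rw [Pi.div_apply, sum_mul_exp_eq_exp_mul_sum _ (fun ℓ => a ℓ * g ℓ) g β M,
    sum_mul_exp_eq_exp_mul_sum _ a g β M, mul_div_mul_left _ _ (exp_ne_zero _)]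

theorem score_tendsto_atTop_general {S L : Type*} [Fintype S] [Fintype L] [Nonempty L]
    (U : S → L → ℝ) (x : S → L) (w : S → L → ℝ) (hw : ∀ s ℓ, 0 < w s ℓ) :
    Filter.Tendsto
      (fun β : ℝ => ∑ s, (U s (x s) -
        (∑ ℓ, w s ℓ * U s ℓ * Real.exp (β * U s ℓ)) /
          (∑ ℓ, w s ℓ * Real.exp (β * U s ℓ))))
      Filter.atTop
      (nhds (∑ s, (U s (x s) - Finset.univ.sup' Finset.univ_nonempty (U s)))) :=
  tendsto_finsetSum _ fun s _ => (tendsto_gibbs_mean_atTop (w s) (U s) (hw s)).const_sub _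

/-- The pseudolikelihood score function tends to
∑ₛ (U_s(x_s) − max_ℓ U_s(ℓ)) as β → +∞. -/
theorem score_tendsto_atTop {S L : Type*} [Fintype S] [Nonempty S] [Fintype L] [Nonempty L]
    (U : S → L → ℝ) (x : S → L) (w : S → L → ℝ) (hw : ∀ s ℓ, 0 < w s ℓ) :
    Filter.Tendsto
      (fun β : ℝ => ∑ s, (U s (x s) -
        (∑ ℓ, w s ℓ * U s ℓ * Real.exp (β * U s ℓ)) /
          (∑ ℓ, w s ℓ * Real.exp (β * U s ℓ))))
      Filter.atTop
      (nhds (∑ s, (U s (x s) - Finset.univ.sup' Finset.univ_nonempty (U s)))) :=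
  score_tendsto_atTop_general U x w hw
end

section
/- Let S and L be nonempty finite types, U : S → L → ℝ, x : S → L, and w : S → L → ℝ with w(s)(ℓ) > 0 for all s, ℓ. Define f(β) = ∑_{s ∈ S} [U(s)(x(s)) − (∑_{ℓ} w(s)(ℓ)·U(s)(ℓ)·exp(β·U(s)(ℓ))) / (∑_{ℓ} w(s)(ℓ)·exp(β·U(s)(ℓ)))]. If there exists a site s ∈ S such that U(s)(x(s)) > min_{ℓ ∈ L} U(s)(ℓ), then f is strictly decreasing (strictly antitone) on ℝ. -/
/-!
The subtracted term at site `s` is the mean of `U s` under the Gibbs weights `w s ℓ * exp (β * U s ℓ)`.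
Raising `β` by `γ > 0` reweights these by `exp (γ * U s ℓ)`, which is ordered like `U s` itself, so by the
weighted Chebyshev sum inequality the mean does not decrease; it strictly increases as soon as `U s` is
nonconstant, which is what the hypothesis provides at one site.
-/

open Finset Real

section Chebyshev

variable {ι R : Type*} [Fintype ι] [CommRing R]

theorem sum_sum_mul_sub_mul_sub (p f g : ι → R) :
    ∑ i, ∑ j, p i * p j * ((f i - f j) * (g i - g j)) =
      2 * ((∑ i, p i) * ∑ i, p i * f i * g i - (∑ i, p i * f i) * ∑ i, p i * g i) := by
  calc
    _ = ∑ i, ∑ j, (p i * f i * g i * p j + p i * (p j * f j * g j)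
          - p i * f i * (p j * g j) - p i * g i * (p j * f j)) :=
      sum_congr rfl fun i _ ↦ sum_congr rfl fun j _ ↦ by ring
    _ = _ := by
      simp only [sum_add_distrib, sum_sub_distrib, ← sum_mul_sum]
      ring

variable [LinearOrder R] [IsStrictOrderedRing R] {p f g : ι → R}

theorem sum_mul_sum_le_sum_mul_sum_of_monovary (hp : ∀ i, 0 ≤ p i) (hfg : Monovary f g) :
    (∑ i, p i * f i) * ∑ i, p i * g i ≤ (∑ i, p i) * ∑ i, p i * f i * g i := by
  have : 0 ≤ ∑ i, ∑ j, p i * p j * ((f i - f j) * (g i - g j)) :=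
    sum_nonneg fun i _ ↦ sum_nonneg fun j _ ↦
      mul_nonneg (mul_nonneg (hp i) (hp j)) (hfg.sub_mul_sub_nonneg j i)
  rw [sum_sum_mul_sub_mul_sub] at this
  linarith

theorem sum_mul_sum_lt_sum_mul_sum_of_monovary (hp : ∀ i, 0 < p i) (hfg : Monovary f g)
    {i j : ι} (hij : 0 < (f i - f j) * (g i - g j)) :
    (∑ i, p i * f i) * ∑ i, p i * g i < (∑ i, p i) * ∑ i, p i * f i * g i := by
  have hterm : ∀ k l, 0 ≤ p k * p l * ((f k - f l) * (g k - g l)) := fun k l ↦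
    mul_nonneg (mul_pos (hp k) (hp l)).le (hfg.sub_mul_sub_nonneg l k)
  have : 0 < ∑ k, ∑ l, p k * p l * ((f k - f l) * (g k - g l)) :=
    sum_pos' (fun k _ ↦ sum_nonneg fun l _ ↦ hterm k l)
      ⟨i, mem_univ _, sum_pos' (fun l _ ↦ hterm i l)
        ⟨j, mem_univ _, mul_pos (mul_pos (hp i) (hp j)) hij⟩⟩
  rw [sum_sum_mul_sub_mul_sub] at this
  linarith

end Chebyshev

theorem sub_mul_exp_mul_sub_exp_mul_pos {γ a b : ℝ} (hγ : 0 < γ) (hab : a ≠ b) :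
    0 < (a - b) * (exp (γ * a) - exp (γ * b)) := by
  rcases hab.lt_or_gt with hab | hab
  · exact mul_pos_of_neg_of_neg (sub_neg.2 hab) (sub_neg.2 (exp_lt_exp.2 (by gcongr)))
  · exact mul_pos (sub_pos.2 hab) (sub_pos.2 (exp_lt_exp.2 (by gcongr)))

theorem monovary_exp_mul {ι : Type*} {γ : ℝ} (hγ : 0 ≤ γ) (u : ι → ℝ) :
    Monovary u fun ℓ ↦ exp (γ * u ℓ) :=
  ((monovary_self u).comp_monotone_left
    (exp_monotone.comp (monotone_mul_left_of_nonneg hγ))).symm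

section TiltedMean

variable {L : Type*} [Fintype L] {p : L → ℝ} {u : L → ℝ}

noncomputable def tiltedMean (p u : L → ℝ) (β : ℝ) : ℝ :=
  (∑ ℓ, p ℓ * u ℓ * exp (β * u ℓ)) / ∑ ℓ, p ℓ * exp (β * u ℓ)

theorem tiltedMean_add (p u : L → ℝ) (β γ : ℝ) :
    tiltedMean p u (β + γ) = tiltedMean (fun ℓ ↦ p ℓ * exp (β * u ℓ)) u γ := by
  unfold tiltedMean
  congr 1 <;> refine sum_congr rfl fun ℓ _ ↦ ?_ <;> rw [add_mul, exp_add] <;> ring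

theorem sum_mul_exp_pos [Nonempty L] (hp : ∀ ℓ, 0 < p ℓ) (β : ℝ) :
    0 < ∑ ℓ, p ℓ * exp (β * u ℓ) :=
  sum_pos (fun ℓ _ ↦ mul_pos (hp ℓ) (exp_pos _)) univ_nonempty

theorem tiltedMean_sub_tiltedMean_zero [Nonempty L] (hp : ∀ ℓ, 0 < p ℓ) (γ : ℝ) :
    tiltedMean p u γ - tiltedMean p u 0 =
      ((∑ ℓ, p ℓ) * (∑ ℓ, p ℓ * u ℓ * exp (γ * u ℓ)) -
          (∑ ℓ, p ℓ * u ℓ) * ∑ ℓ, p ℓ * exp (γ * u ℓ)) /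
        ((∑ ℓ, p ℓ) * ∑ ℓ, p ℓ * exp (γ * u ℓ)) := by
  unfold tiltedMean
  simp only [zero_mul, exp_zero, mul_one]
  rw [div_sub_div _ _ (sum_mul_exp_pos hp γ).ne' (sum_pos (fun ℓ _ ↦ hp ℓ) univ_nonempty).ne']
  ring

theorem tiltedMean_zero_le [Nonempty L] (hp : ∀ ℓ, 0 < p ℓ) {γ : ℝ} (hγ : 0 ≤ γ) :
    tiltedMean p u 0 ≤ tiltedMean p u γ := by
  rw [← sub_nonneg, tiltedMean_sub_tiltedMean_zero hp]
  refine div_nonneg (sub_nonneg.2 ?_)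
    (mul_pos (sum_pos (fun ℓ _ ↦ hp ℓ) univ_nonempty) (sum_mul_exp_pos hp γ)).le
  exact sum_mul_sum_le_sum_mul_sum_of_monovary (fun ℓ ↦ (hp ℓ).le) (monovary_exp_mul hγ u)

theorem tiltedMean_zero_lt (hp : ∀ ℓ, 0 < p ℓ) {γ : ℝ} (hγ : 0 < γ) {ℓ m : L}
    (hu : u ℓ ≠ u m) : tiltedMean p u 0 < tiltedMean p u γ := by
  have : Nonempty L := ⟨ℓ⟩
  rw [← sub_pos, tiltedMean_sub_tiltedMean_zero hp]
  refine div_pos (sub_pos.2 ?_)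
    (mul_pos (sum_pos (fun ℓ _ ↦ hp ℓ) univ_nonempty) (sum_mul_exp_pos hp γ))
  exact sum_mul_sum_lt_sum_mul_sum_of_monovary hp (monovary_exp_mul hγ.le u)
    (sub_mul_exp_mul_sub_exp_mul_pos hγ hu)

theorem tiltedMean_monotone [Nonempty L] (hp : ∀ ℓ, 0 < p ℓ) : Monotone (tiltedMean p u) := by
  intro β₁ β₂ hβ
  rw [← add_zero β₁, ← add_sub_cancel β₁ β₂, tiltedMean_add, tiltedMean_add]
  exact tiltedMean_zero_le (fun ℓ ↦ mul_pos (hp ℓ) (exp_pos _)) (sub_nonneg.2 hβ)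

theorem tiltedMean_strictMono (hp : ∀ ℓ, 0 < p ℓ) {ℓ m : L} (hu : u ℓ ≠ u m) :
    StrictMono (tiltedMean p u) := by
  intro β₁ β₂ hβ
  rw [← add_zero β₁, ← add_sub_cancel β₁ β₂, tiltedMean_add, tiltedMean_add]
  exact tiltedMean_zero_lt (fun ℓ ↦ mul_pos (hp ℓ) (exp_pos _)) (sub_pos.2 hβ) hu

end TiltedMean

theorem score_strictAnti_general {S L : Type*} [Fintype S] [Fintype L] [Nonempty L]
    (U : S → L → ℝ) (x : S → L) (w : S → L → ℝ) (hw : ∀ s ℓ, 0 < w s ℓ)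
    (h : ∃ s : S, Finset.univ.inf' Finset.univ_nonempty (U s) < U s (x s)) :
    StrictAnti (fun β : ℝ => ∑ s, (U s (x s) -
      (∑ ℓ, w s ℓ * U s ℓ * Real.exp (β * U s ℓ)) /
        (∑ ℓ, w s ℓ * Real.exp (β * U s ℓ)))) := by
  intro β₁ β₂ hβ
  obtain ⟨s₀, hs₀⟩ := h
  obtain ⟨ℓ₀, -, hℓ₀⟩ := exists_mem_eq_inf' univ_nonempty (U s₀)
  exact sum_lt_sum (fun s _ ↦ sub_le_sub_left (tiltedMean_monotone (hw s) hβ.le) _)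
    ⟨s₀, mem_univ _, sub_lt_sub_left (tiltedMean_strictMono (hw s₀) (hℓ₀ ▸ hs₀).ne hβ) _⟩

/-- If at some site the observed neighbor count exceeds the minimum possible one,
the pseudolikelihood score function is strictly decreasing in β. -/
theorem score_strictAnti {S L : Type*} [Fintype S] [Nonempty S] [Fintype L] [Nonempty L]
    (U : S → L → ℝ) (x : S → L) (w : S → L → ℝ) (hw : ∀ s ℓ, 0 < w s ℓ)
    (h : ∃ s : S, Finset.univ.inf' Finset.univ_nonempty (U s) < U s (x s)) :
    StrictAnti (fun β : ℝ => ∑ s, (U s (x s) -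
      (∑ ℓ, w s ℓ * U s ℓ * Real.exp (β * U s ℓ)) /
        (∑ ℓ, w s ℓ * Real.exp (β * U s ℓ)))) :=
  score_strictAnti_general U x w hw h
end

section
/- (Existence and uniqueness of the prior pseudo-maximum-likelihood estimator.) Let S and L be nonempty finite types, U : S → L → ℝ, and x : S → L. Define f_prior(β) = ∑_{s ∈ S} [U(s)(x(s)) − (∑_{ℓ} U(s)(ℓ)·exp(β·U(s)(ℓ))) / (∑_{ℓ} exp(β·U(s)(ℓ)))]. If there exist sites s, t ∈ S with U(s)(x(s)) > min_{ℓ ∈ L} U(s)(ℓ) and U(t)(x(t)) < max_{ℓ ∈ L} U(t)(ℓ), then there exists a unique β ∈ ℝ such that f_prior(β) = 0. -/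
/-!
The summand of `f_prior` at a site `s` is `U s (x s)` minus the mean of `U s` under the Gibbs
weights `exp (β * U s ℓ)`. This Gibbs mean is nondecreasing in `β`, strictly increasing when
`U s` is nonconstant (the difference of two Gibbs means symmetrizes into a sum of terms
`(a i - a j) * (exp (β₂ * a i + β₁ * a j) - exp (β₁ * a i + β₂ * a j)) ≥ 0`), and it tends to
`min U s` as `β → -∞` and to `max U s` as `β → ∞`. So `f_prior` is continuous and strictly
decreasing, positive near `-∞` by the first half of condition (7) and negative near `∞` by the
second; hence it has exactly one root.
-/

open Finset Filter Topology Real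

lemma two_mul_sum_sum_of_antisymm {ι R : Type*} [Fintype ι] [CommRing R] (a : ι → R)
    (D : ι → ι → R) (hD : ∀ i j, D j i = -D i j) :
    2 * ∑ i, ∑ j, a i * D i j = ∑ i, ∑ j, (a i - a j) * D i j := by
  have hswap : ∑ i, ∑ j, a j * D i j = -∑ i, ∑ j, a i * D i j := by
    rw [sum_comm, ← sum_neg_distrib]
    refine sum_congr rfl fun i _ ↦ ?_
    rw [← sum_neg_distrib]
    exact sum_congr rfl fun j _ ↦ by rw [hD, mul_neg]
  simp only [sub_mul, sum_sub_distrib]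
  linear_combination hswap

section GibbsMean

variable {ι : Type*} [Fintype ι]

noncomputable def gibbsMean (a : ι → ℝ) (β : ℝ) : ℝ :=
  (∑ i, a i * exp (β * a i)) / ∑ i, exp (β * a i)

lemma sum_exp_mul_pos [Nonempty ι] (a : ι → ℝ) (β : ℝ) : 0 < ∑ i, exp (β * a i) :=
  sum_pos (fun _ _ ↦ exp_pos _) univ_nonempty

lemma sub_mul_exp_sub_exp_nonneg {β₁ β₂ : ℝ} (hβ : β₁ ≤ β₂) (x y : ℝ) :
    0 ≤ (x - y) * (exp (β₂ * x + β₁ * y) - exp (β₁ * x + β₂ * y)) := by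
  rcases le_total x y with hxy | hxy
  · exact mul_nonneg_of_nonpos_of_nonpos (by linarith)
      (sub_nonpos.2 <| exp_le_exp.2 <| by nlinarith)
  · exact mul_nonneg (by linarith) (sub_nonneg.2 <| exp_le_exp.2 <| by nlinarith)

lemma sub_mul_exp_sub_exp_pos {β₁ β₂ : ℝ} (hβ : β₁ < β₂) {x y : ℝ} (hxy : x ≠ y) :
    0 < (x - y) * (exp (β₂ * x + β₁ * y) - exp (β₁ * x + β₂ * y)) := by
  rcases hxy.lt_or_gt with hxy | hxy
  · exact mul_pos_of_neg_of_neg (by linarith) (sub_neg.2 <| exp_lt_exp.2 <| by nlinarith)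
  · exact mul_pos (by linarith) (sub_pos.2 <| exp_lt_exp.2 <| by nlinarith)

lemma gibbsMean_sub_gibbsMean [Nonempty ι] (a : ι → ℝ) (β₁ β₂ : ℝ) :
    gibbsMean a β₂ - gibbsMean a β₁ =
      (∑ i, ∑ j, (a i - a j) * (exp (β₂ * a i + β₁ * a j) - exp (β₁ * a i + β₂ * a j))) /
        (2 * (∑ i, exp (β₁ * a i)) * ∑ i, exp (β₂ * a i)) := by
  have hZ₁ := (sum_exp_mul_pos a β₁).ne'
  have hZ₂ := (sum_exp_mul_pos a β₂).ne'
  have hprod : ∀ γ δ : ℝ, (∑ i, a i * exp (γ * a i)) * ∑ j, exp (δ * a j) =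
      ∑ i, ∑ j, a i * exp (γ * a i + δ * a j) := fun γ δ ↦ by
    simp only [sum_mul_sum, exp_add, mul_assoc]
  rw [← two_mul_sum_sum_of_antisymm _ _ fun i j ↦ by
    rw [neg_sub, add_comm (β₂ * a j), add_comm (β₁ * a j)]]
  simp only [mul_sub, sum_sub_distrib, ← hprod, gibbsMean]
  rw [div_sub_div _ _ hZ₂ hZ₁, div_eq_div_iff (mul_ne_zero hZ₂ hZ₁) (by positivity)]
  ring

lemma gibbsMean_monotone [Nonempty ι] (a : ι → ℝ) : Monotone (gibbsMean a) := fun β₁ β₂ hβ ↦ by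
  rw [← sub_nonneg, gibbsMean_sub_gibbsMean]
  refine div_nonneg (sum_nonneg fun i _ ↦ sum_nonneg fun j _ ↦
    sub_mul_exp_sub_exp_nonneg hβ _ _) ?_
  have := sum_exp_mul_pos a β₁
  have := sum_exp_mul_pos a β₂
  positivity

lemma gibbsMean_strictMono_s13 [Nonempty ι] {a : ι → ℝ} (ha : ∃ i j, a i ≠ a j) :
    StrictMono (gibbsMean a) := fun β₁ β₂ hβ ↦ by
  obtain ⟨i₀, j₀, hij⟩ := ha
  rw [← sub_pos, gibbsMean_sub_gibbsMean]
  have hnonneg : ∀ i j, 0 ≤ (a i - a j) *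
      (exp (β₂ * a i + β₁ * a j) - exp (β₁ * a i + β₂ * a j)) :=
    fun _ _ ↦ sub_mul_exp_sub_exp_nonneg hβ.le _ _
  refine div_pos (sum_pos' (fun i _ ↦ sum_nonneg fun j _ ↦ hnonneg i j)
    ⟨i₀, mem_univ _, sum_pos' (fun j _ ↦ hnonneg i₀ j)
      ⟨j₀, mem_univ _, sub_mul_exp_sub_exp_pos hβ hij⟩⟩) ?_
  have := sum_exp_mul_pos a β₁
  have := sum_exp_mul_pos a β₂
  positivity

lemma continuous_gibbsMean [Nonempty ι] (a : ι → ℝ) : Continuous (gibbsMean a) :=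
  .div (by fun_prop) (by fun_prop) fun β ↦ (sum_exp_mul_pos a β).ne'

lemma gibbsMean_eq_shift (a : ι → ℝ) (β c : ℝ) :
    gibbsMean a β = (∑ i, a i * exp (β * (a i - c))) / ∑ i, exp (β * (a i - c)) := by
  simp only [mul_sub, exp_sub, ← mul_div_assoc, ← sum_div]
  rw [gibbsMean, div_div_div_cancel_right₀ (exp_ne_zero _)]

lemma tendsto_gibbsMean_atTop {a : ι → ℝ} {M : ℝ} (hle : ∀ i, a i ≤ M) (hM : ∃ i, a i = M) :
    Tendsto (gibbsMean a) atTop (𝓝 M) := by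
  classical
  set w : ι → ℝ := fun i ↦ if a i = M then 1 else 0
  have hexp : ∀ i, Tendsto (fun β ↦ exp (β * (a i - M))) atTop (𝓝 (w i)) := fun i ↦ by
    by_cases h : a i = M
    · simp [w, h]
    · simp only [w, if_neg h]
      exact tendsto_exp_atBot.comp <|
        tendsto_id.atTop_mul_const_of_neg (sub_neg.2 <| (hle i).lt_of_ne h)
  have hw : 0 < ∑ i, w i := by
    obtain ⟨i₀, hi₀⟩ := hM
    exact sum_pos' (fun i _ ↦ by positivity) ⟨i₀, mem_univ _, by simp [w, hi₀]⟩
  have hlim : (∑ i, a i * w i) / ∑ i, w i = M := by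
    rw [div_eq_iff hw.ne', mul_sum]
    exact sum_congr rfl fun i _ ↦ by by_cases h : a i = M <;> simp [w, h]
  rw [← hlim, funext fun β ↦ gibbsMean_eq_shift a β M]
  exact (tendsto_finsetSum _ fun i _ ↦ (hexp i).const_mul (a i)).div
    (tendsto_finsetSum _ fun i _ ↦ hexp i) hw.ne'

lemma gibbsMean_neg (a : ι → ℝ) (β : ℝ) : gibbsMean (-a) (-β) = -gibbsMean a β := by
  simp only [gibbsMean, Pi.neg_apply, mul_neg, neg_mul, neg_neg, sum_neg_distrib, neg_div]

lemma tendsto_gibbsMean_atBot {a : ι → ℝ} {m : ℝ} (hle : ∀ i, m ≤ a i) (hm : ∃ i, a i = m) :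
    Tendsto (gibbsMean a) atBot (𝓝 m) := by
  have h := ((tendsto_gibbsMean_atTop (a := -a) (M := -m) (fun i ↦ neg_le_neg (hle i))
    (hm.imp fun i hi ↦ by simp [hi])).comp tendsto_neg_atBot_atTop).neg
  simpa [Function.comp_def, gibbsMean_neg] using h

end GibbsMean

section PriorScore

variable {S L : Type*} [Fintype S] [Fintype L] [Nonempty L]

noncomputable def priorScore (U : S → L → ℝ) (x : S → L) (β : ℝ) : ℝ :=
  ∑ s, (U s (x s) - gibbsMean (U s) β)

lemma priorScore_strictAnti (U : S → L → ℝ) (x : S → L) (hU : ∃ s, ∃ i j, U s i ≠ U s j) :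
    StrictAnti (priorScore U x) := fun _ _ hβ ↦ by
  obtain ⟨s, hs⟩ := hU
  exact sum_lt_sum (fun t _ ↦ sub_le_sub_left (gibbsMean_monotone (U t) hβ.le) _)
    ⟨s, mem_univ _, sub_lt_sub_left (gibbsMean_strictMono_s13 hs hβ) _⟩

lemma continuous_priorScore (U : S → L → ℝ) (x : S → L) : Continuous (priorScore U x) :=
  continuous_finsetSum _ fun s _ ↦ continuous_const.sub (continuous_gibbsMean (U s))

lemma tendsto_priorScore_atBot (U : S → L → ℝ) (x : S → L) :
    Tendsto (priorScore U x) atBot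
      (𝓝 (∑ s, (U s (x s) - univ.inf' univ_nonempty (U s)))) :=
  tendsto_finsetSum _ fun s _ ↦ tendsto_const_nhds.sub <|
    tendsto_gibbsMean_atBot (fun _ ↦ inf'_le _ (mem_univ _))
      (let ⟨i, _, hi⟩ := exists_mem_eq_inf' univ_nonempty (U s); ⟨i, hi.symm⟩)

lemma tendsto_priorScore_atTop (U : S → L → ℝ) (x : S → L) :
    Tendsto (priorScore U x) atTop
      (𝓝 (∑ s, (U s (x s) - univ.sup' univ_nonempty (U s)))) :=
  tendsto_finsetSum _ fun s _ ↦ tendsto_const_nhds.sub <|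
    tendsto_gibbsMean_atTop (fun _ ↦ le_sup' _ (mem_univ _))
      (let ⟨i, _, hi⟩ := exists_mem_eq_sup' univ_nonempty (U s); ⟨i, hi.symm⟩)

end PriorScore

theorem fprior_existsUnique_root_general
    {S L : Type*} [Fintype S] [Fintype L] [Nonempty L]
    (U : S → L → ℝ) (x : S → L)
    (hs : ∃ s : S, Finset.univ.inf' Finset.univ_nonempty (U s) < U s (x s))
    (ht : ∃ t : S, U t (x t) < Finset.univ.sup' Finset.univ_nonempty (U t)) :
    ∃! β : ℝ, ∑ s, (U s (x s) -
      (∑ ℓ, U s ℓ * Real.exp (β * U s ℓ)) / (∑ ℓ, Real.exp (β * U s ℓ))) = 0 := by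
  change ∃! β, priorScore U x β = 0
  obtain ⟨s, hs⟩ := hs
  obtain ⟨t, ht⟩ := ht
  have hU : ∃ s, ∃ i j, U s i ≠ U s j := by
    obtain ⟨i, _, hi⟩ := exists_mem_eq_inf' univ_nonempty (U s)
    exact ⟨s, x s, i, (hi ▸ hs).ne'⟩
  have hpos : 0 < ∑ s, (U s (x s) - univ.inf' univ_nonempty (U s)) :=
    sum_pos' (fun _ _ ↦ sub_nonneg.2 (inf'_le _ (mem_univ _))) ⟨s, mem_univ _, sub_pos.2 hs⟩
  have hneg : ∑ s, (U s (x s) - univ.sup' univ_nonempty (U s)) < 0 :=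
    sum_neg' (fun _ _ ↦ sub_nonpos.2 (le_sup' _ (mem_univ _))) ⟨t, mem_univ _, sub_neg.2 ht⟩
  obtain ⟨β₁, hβ₁⟩ := ((tendsto_priorScore_atBot U x).eventually (lt_mem_nhds hpos)).exists
  obtain ⟨β₂, hβ₂⟩ := ((tendsto_priorScore_atTop U x).eventually (gt_mem_nhds hneg)).exists
  obtain ⟨β, hβ⟩ := mem_range_of_exists_le_of_exists_ge (continuous_priorScore U x)
    ⟨β₂, hβ₂.le⟩ ⟨β₁, hβ₁.le⟩
  exact ⟨β, hβ, fun γ hγ ↦ (priorScore_strictAnti U x hU).injective (hγ.trans hβ.symm)⟩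

/-- Existence and uniqueness of the prior pseudo-maximum-likelihood estimator. -/
theorem fprior_existsUnique_root
    {S L : Type*} [Fintype S] [Nonempty S] [Fintype L] [Nonempty L]
    (U : S → L → ℝ) (x : S → L)
    (hs : ∃ s : S, Finset.univ.inf' Finset.univ_nonempty (U s) < U s (x s))
    (ht : ∃ t : S, U t (x t) < Finset.univ.sup' Finset.univ_nonempty (U t)) :
    ∃! β : ℝ, ∑ s, (U s (x s) -
      (∑ ℓ, U s ℓ * Real.exp (β * U s ℓ)) / (∑ ℓ, Real.exp (β * U s ℓ))) = 0 :=
  fprior_existsUnique_root_general U x hs ht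
end
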